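/- The quantity m(t) := sup_{x,y ∈ ℝ} |R(t,x,y)| tends to 0 as t → ∞. -/

import Mathlib

noncomputable section
open MeasureTheory Real Filter

/-- The Mehler kernel `G(t,x,y)`, the integral kernel of `e^{-tH}` for the
harmonic oscillator `H = ½(-d²/dx² + x²)`. -/
def G (t x y : ℝ) : ℝ :=
  (2 * Real.pi * Real.sinh t) ^ (-(1 : ℝ) / 2) *
    Real.exp (-(((x ^ 2 + y ^ 2) * Real.cosh t - 2 * x * y) / (2 * Real.sinh t)))

/-- The leading error kernel `R(t,x,y)`. -/
def R (t x y : ℝ) : ℝ :=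
  G t x y * (t ^ 2 / 12) *
    (t * ((1 / 4) * (Real.exp t + Real.exp (-t)) / (Real.exp t - Real.exp (-t)) +
          ((Real.exp t + Real.exp (-t)) * x * y - (x ^ 2 + y ^ 2)) /
            (Real.exp t - Real.exp (-t)) ^ 2) +
      (1 / 16) * (1 + (4 * x * y - (Real.exp t + Real.exp (-t)) * (x ^ 2 + y ^ 2)) /
            (Real.exp t - Real.exp (-t))))

/-!
For `t ≥ 2` the kernel `R` is uniformly bounded by `t³ e^{-t/2}`. The prefactor
`(2π sinh t)^{-1/2}` of `G` is at most `e^{-t/2}`; since `2xy ≤ x² + y²` and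
`sinh t ≤ 2 (cosh t - 1)`, the Gaussian factor of `G` is at most `e^{-(x²+y²)/4}`; and the
bracket in `R` grows at most like `(t + 1)(1 + x² + y²)`, which the Gaussian absorbs
because `(1 + s) e^{-s/4} ≤ 4`.
-/

lemma add_mul_exp_neg_div_le {c : ℝ} (hc : 0 < c) (s : ℝ) : (c + s) * exp (-(s / c)) ≤ c := by
  have h := add_one_le_exp (s / c)
  rw [exp_neg, mul_inv_le_iff₀ (exp_pos _)]
  calc c + s = c * (s / c + 1) := by field_simp; ring
    _ ≤ c * exp (s / c) := by gcongr

lemma tendsto_pow_three_mul_exp_neg_half_atTop :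
    Tendsto (fun t : ℝ => t ^ 3 * exp (-t / 2)) atTop (nhds 0) := by
  have h := ((tendsto_pow_mul_exp_neg_atTop_nhds_zero 3).comp
    (tendsto_id.atTop_div_const (by norm_num : (0 : ℝ) < 2))).const_mul 8
  rw [mul_zero] at h
  refine h.congr fun t => ?_
  simp only [Function.comp_apply, id]
  ring_nf

lemma three_le_exp {t : ℝ} (ht : 2 ≤ t) : 3 ≤ exp t := by
  linarith [add_one_le_exp t]

lemma sinh_le_two_mul_cosh_sub_one {t : ℝ} (ht : 2 ≤ t) : sinh t ≤ 2 * (cosh t - 1) := by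
  have hE := three_le_exp ht
  have hEe : exp t * exp (-t) = 1 := by rw [← exp_add, add_neg_cancel, exp_zero]
  rw [sinh_eq, cosh_eq]
  nlinarith [exp_pos (-t)]

lemma rpow_two_pi_sinh_le {t : ℝ} (ht : 1 ≤ t) :
    (2 * π * sinh t) ^ (-(1 : ℝ) / 2) ≤ exp (-t / 2) := by
  have hE : 2 ≤ exp t := by linarith [add_one_le_exp t]
  have he : exp (-t) ≤ 1 := exp_le_one_iff.mpr (by linarith)
  have hsinh : exp t ≤ 2 * π * sinh t := by
    rw [sinh_eq]
    nlinarith [pi_gt_three]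
  calc (2 * π * sinh t) ^ (-(1 : ℝ) / 2) ≤ exp t ^ (-(1 : ℝ) / 2) :=
        rpow_le_rpow_of_nonpos (exp_pos t) hsinh (by norm_num)
    _ = exp (-t / 2) := by rw [← exp_mul]; ring_nf

lemma G_pos {t : ℝ} (ht : 0 < t) (x y : ℝ) : 0 < G t x y := by
  unfold G
  have := sinh_pos_iff.mpr ht
  positivity

lemma G_le {t : ℝ} (ht : 2 ≤ t) (x y : ℝ) :
    G t x y ≤ exp (-t / 2) * exp (-((x ^ 2 + y ^ 2) / 4)) := by
  have hsinh : 0 < sinh t := sinh_pos_iff.mpr (by linarith)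
  have hexponent : (x ^ 2 + y ^ 2) / 4 ≤
      ((x ^ 2 + y ^ 2) * cosh t - 2 * x * y) / (2 * sinh t) := by
    rw [div_le_div_iff₀ (by norm_num) (by positivity)]
    nlinarith [sinh_le_two_mul_cosh_sub_one ht, sq_nonneg (x - y), sq_nonneg x, sq_nonneg y,
      mul_nonneg (add_nonneg (sq_nonneg x) (sq_nonneg y)) hsinh.le]
  unfold G
  gcongr
  exact rpow_two_pi_sinh_le (by linarith)

lemma abs_R_bracket_le {t S D : ℝ} (ht : 0 ≤ t) (hD : 2 ≤ D) (hS : 0 ≤ S)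
    (hSD : S ≤ 2 * D) (x y : ℝ) :
    |t * (1 / 4 * S / D + (S * x * y - (x ^ 2 + y ^ 2)) / D ^ 2) +
        1 / 16 * (1 + (4 * x * y - S * (x ^ 2 + y ^ 2)) / D)| ≤
      (t + 1) * (1 + (x ^ 2 + y ^ 2)) := by
  set s := x ^ 2 + y ^ 2
  have hs : 0 ≤ s := by positivity
  have hxy : |2 * x * y| ≤ s := by
    rw [abs_le]; constructor <;> nlinarith [sq_nonneg (x + y), sq_nonneg (x - y)]
  have hD0 : 0 < D := by linarith
  have h1 : |1 / 4 * S / D| ≤ 1 / 2 := by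
    rw [abs_of_nonneg (div_nonneg (by linarith) hD0.le), div_le_iff₀ hD0]
    linarith
  have h2 : |(S * x * y - s) / D ^ 2| ≤ s := by
    rw [abs_div, abs_of_pos (by positivity : 0 < D ^ 2), div_le_iff₀ (by positivity)]
    calc |S * x * y - s| ≤ S / 2 * |2 * x * y| + s := by
          rw [show S * x * y = S / 2 * (2 * x * y) by ring]
          refine (abs_sub _ _).trans ?_
          rw [abs_mul, abs_of_nonneg (by linarith : 0 ≤ S / 2), abs_of_nonneg hs]
      _ ≤ S / 2 * s + s := by gcongr
      _ ≤ s * D ^ 2 := by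
          nlinarith [mul_nonneg hs (by nlinarith : 0 ≤ D ^ 2 - D - 1),
            mul_le_mul_of_nonneg_right hSD hs]
  have h3 : |(4 * x * y - S * s) / D| ≤ 3 * s := by
    rw [abs_div, abs_of_pos hD0, div_le_iff₀ hD0]
    calc |4 * x * y - S * s| ≤ 2 * |2 * x * y| + S * s := by
          rw [show 4 * x * y = 2 * (2 * x * y) by ring]
          refine (abs_sub _ _).trans ?_
          rw [abs_mul, abs_of_nonneg (by norm_num : (0 : ℝ) ≤ 2),
            abs_of_nonneg (mul_nonneg hS hs)]
      _ ≤ 2 * s + S * s := by gcongr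
      _ ≤ 3 * s * D := by nlinarith
  calc _ ≤ t * (|1 / 4 * S / D| + |(S * x * y - s) / D ^ 2|) +
        1 / 16 * (1 + |(4 * x * y - S * s) / D|) := by
        refine (abs_add_le _ _).trans ?_
        rw [abs_mul, abs_mul, abs_of_nonneg ht, abs_of_pos (by norm_num : (0 : ℝ) < 1 / 16)]
        gcongr
        · exact abs_add_le _ _
        · exact (abs_add_le _ _).trans (by rw [abs_one])
    _ ≤ t * (1 / 2 + s) + 1 / 16 * (1 + 3 * s) := by gcongr
    _ ≤ (t + 1) * (1 + s) := by nlinarith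

lemma abs_R_le {t : ℝ} (ht : 2 ≤ t) (x y : ℝ) : |R t x y| ≤ t ^ 3 * exp (-t / 2) := by
  have hE := three_le_exp ht
  have he : exp (-t) ≤ 1 := exp_le_one_iff.mpr (by linarith)
  have hbracket := abs_R_bracket_le (by linarith : 0 ≤ t) (by linarith : 2 ≤ exp t - exp (-t))
    (by positivity : 0 ≤ exp t + exp (-t)) (by linarith) x y
  set s := x ^ 2 + y ^ 2
  have hgauss : (1 + s) * exp (-(s / 4)) ≤ 4 :=
    (mul_le_mul_of_nonneg_right (by linarith) (exp_pos _).le).trans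
      (add_mul_exp_neg_div_le (by norm_num : (0 : ℝ) < 4) s)
  unfold R
  rw [abs_mul, abs_mul, abs_of_pos (G_pos (by linarith) x y), abs_of_nonneg (by positivity)]
  calc _ ≤ exp (-t / 2) * exp (-(s / 4)) * (t ^ 2 / 12) * ((t + 1) * (1 + s)) := by
        gcongr
        exact G_le ht x y
    _ = exp (-t / 2) * (t ^ 2 * (t + 1) / 12) * ((1 + s) * exp (-(s / 4))) := by ring
    _ ≤ exp (-t / 2) * (t ^ 2 * (t + 1) / 12) * 4 := by gcongr
    _ = t ^ 2 * (t + 1) / 3 * exp (-t / 2) := by ring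
    _ ≤ t ^ 3 * exp (-t / 2) := by gcongr; nlinarith

/-- `m(t) = sup_{x,y} |R(t,x,y)|` tends to `0` as `t → ∞`. -/
theorem R_sup_tendsto_zero_at_infinity :
    Tendsto (fun t : ℝ => ⨆ p : ℝ × ℝ, |R t p.1 p.2|) atTop (nhds 0) := by
  refine squeeze_zero' (Eventually.of_forall fun t => Real.iSup_nonneg fun p => abs_nonneg _)
    ?_ tendsto_pow_three_mul_exp_neg_half_atTop
  filter_upwards [eventually_ge_atTop 2] with t ht
  exact ciSup_le fun p => abs_R_le ht p.1 p.2
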